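/- arXiv:math/9801139 — 2 statements merged into one kernel-verified Lean document; each statement's English description precedes it below -/
import Mathlib

section
/- Let n ≥ 1, let H : ℝ^{2n} → ℝ be smooth, let β ∈ ℝ, and let μ₀ : C_c^∞(ℝ^{2n}) → ℂ be a ℂ-linear functional. Then μ₀ satisfies the static classical KMS condition μ₀({f, g} − β·g·{f, H}) = 0 for all f, g ∈ C_c^∞(ℝ^{2n}) if and only if the functional f ↦ μ₀(e^{βH}·f) vanishes on all Poisson brackets, i.e. μ₀(e^{βH}·{f, g}) = 0 for all f, g ∈ C_c^∞(ℝ^{2n}). -/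
open MeasureTheory

/-- The `i`-th partial derivative of a function on `ℝᵐ` (modeled as Euclidean space). -/
noncomputable def partialDeriv {m : ℕ} (f : EuclideanSpace ℝ (Fin m) → ℂ) (i : Fin m) :
    EuclideanSpace ℝ (Fin m) → ℂ :=
  fun x => fderiv ℝ f x (EuclideanSpace.single i 1)

/-- The standard Poisson bracket on `ℝ^{2n}`:
`{f, g} = Σ_{k<n} (∂f/∂x_k ∂g/∂x_{n+k} − ∂f/∂x_{n+k} ∂g/∂x_k)`. -/
noncomputable def poissonBracket {n : ℕ} (f g : EuclideanSpace ℝ (Fin (2 * n)) → ℂ) :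
    EuclideanSpace ℝ (Fin (2 * n)) → ℂ :=
  fun x => ∑ k : Fin n,
    (partialDeriv f ⟨k.1, by have := k.isLt; omega⟩ x *
        partialDeriv g ⟨n + k.1, by have := k.isLt; omega⟩ x -
      partialDeriv f ⟨n + k.1, by have := k.isLt; omega⟩ x *
        partialDeriv g ⟨k.1, by have := k.isLt; omega⟩ x)

/-- `C_c^∞(ℝ^{2n})`: smooth compactly supported complex-valued functions on `ℝ^{2n}`. -/
noncomputable def TestFunctions2 (n : ℕ) :
    Submodule ℂ (EuclideanSpace ℝ (Fin (2 * n)) → ℂ) where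
  carrier := {f | ContDiff ℝ (⊤ : ℕ∞) f ∧ HasCompactSupport f}
  add_mem' := fun hf hg => ⟨hf.1.add hg.1, hf.2.add hg.2⟩
  zero_mem' := ⟨contDiff_const, HasCompactSupport.zero⟩
  smul_mem' := fun c f hf => ⟨hf.1.const_smul c,
    IsCompact.of_isClosed_subset hf.2 (isClosed_tsupport _)
      (tsupport_smul_subset_right (fun _ => c) f)⟩

/-
By the Leibniz and chain rules, `{f, e^{βH}·g} − β·(e^{βH}·g)·{f, H} = e^{βH}·{f, g}`.
Multiplication by `e^{βH}` is a bijection of `C_c^∞(ℝ^{2n})` (with inverse multiplication by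
`e^{−βH}`), so the functions on which the KMS condition asks `μ₀` to vanish are exactly the
functions `e^{βH}·{f, g}`.
-/

section PartialDeriv

variable {m : ℕ} {x : EuclideanSpace ℝ (Fin m)}

lemma partialDeriv_mul {f g : EuclideanSpace ℝ (Fin m) → ℂ}
    (hf : DifferentiableAt ℝ f x) (hg : DifferentiableAt ℝ g x) (i : Fin m) :
    partialDeriv (fun y => f y * g y) i x =
      f x * partialDeriv g i x + g x * partialDeriv f i x := by
  simp only [partialDeriv, fderiv_fun_mul hf hg, add_apply, smul_apply, smul_eq_mul]

lemma partialDeriv_ofReal_exp_mul {H : EuclideanSpace ℝ (Fin m) → ℝ}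
    (hH : DifferentiableAt ℝ H x) (β : ℝ) (i : Fin m) :
    partialDeriv (fun y => (Real.exp (β * H y) : ℂ)) i x =
      β * Real.exp (β * H x) * partialDeriv (fun y => (H y : ℂ)) i x := by
  have hexp : HasFDerivAt (fun y => (Real.exp (β * H y) : ℂ)) _ x :=
    Complex.ofRealCLM.hasFDerivAt.comp x (hH.hasFDerivAt.const_mul β).exp
  have hcoe : HasFDerivAt (fun y => (H y : ℂ)) _ x :=
    Complex.ofRealCLM.hasFDerivAt.comp x hH.hasFDerivAt
  rw [partialDeriv, partialDeriv, hexp.fderiv, hcoe.fderiv]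
  simp only [ContinuousLinearMap.comp_apply, smul_apply, smul_eq_mul,
    Complex.ofRealCLM_apply, Complex.ofReal_mul]
  ring

end PartialDeriv

section PoissonBracket

variable {n : ℕ} {x : EuclideanSpace ℝ (Fin (2 * n))}

lemma poissonBracket_mul_right (f : EuclideanSpace ℝ (Fin (2 * n)) → ℂ)
    {φ g : EuclideanSpace ℝ (Fin (2 * n)) → ℂ}
    (hφ : DifferentiableAt ℝ φ x) (hg : DifferentiableAt ℝ g x) :
    poissonBracket f (fun y => φ y * g y) x =
      φ x * poissonBracket f g x + g x * poissonBracket f φ x := by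
  simp only [poissonBracket, partialDeriv_mul hφ hg, Finset.mul_sum, ← Finset.sum_add_distrib]
  exact Finset.sum_congr rfl fun _ _ => by ring

lemma poissonBracket_ofReal_exp_mul (f : EuclideanSpace ℝ (Fin (2 * n)) → ℂ)
    {H : EuclideanSpace ℝ (Fin (2 * n)) → ℝ} (hH : DifferentiableAt ℝ H x) (β : ℝ) :
    poissonBracket f (fun y => (Real.exp (β * H y) : ℂ)) x =
      β * Real.exp (β * H x) * poissonBracket f (fun y => (H y : ℂ)) x := by
  simp only [poissonBracket, partialDeriv_ofReal_exp_mul hH, Finset.mul_sum]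
  exact Finset.sum_congr rfl fun _ _ => by ring

end PoissonBracket

lemma contDiff_ofReal_exp_mul {E : Type*} [NormedAddCommGroup E] [NormedSpace ℝ E]
    {H : E → ℝ} (hH : ContDiff ℝ (⊤ : ℕ∞) H) (β : ℝ) :
    ContDiff ℝ (⊤ : ℕ∞) (fun y => (Real.exp (β * H y) : ℂ)) :=
  Complex.ofRealCLM.contDiff.comp (Real.contDiff_exp.comp (contDiff_const.mul hH))

section ExpWeight

variable {n : ℕ} (H : EuclideanSpace ℝ (Fin (2 * n)) → ℝ) (hH : ContDiff ℝ (⊤ : ℕ∞) H)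
  (β : ℝ)

noncomputable def expWeight (g : TestFunctions2 n) : TestFunctions2 n :=
  ⟨fun y => (Real.exp (β * H y) : ℂ) * (g : EuclideanSpace ℝ (Fin (2 * n)) → ℂ) y,
    (contDiff_ofReal_exp_mul hH β).mul g.2.1, g.2.2.mul_left⟩

lemma expWeight_expWeight_neg (g : TestFunctions2 n) :
    expWeight H hH β (expWeight H hH (-β) g) = g := by
  ext y
  simp only [expWeight, ← mul_assoc, ← Complex.ofReal_mul, ← Real.exp_add]
  simp

lemma poissonBracket_expWeight_sub (f : EuclideanSpace ℝ (Fin (2 * n)) → ℂ)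
    (g : TestFunctions2 n) (x : EuclideanSpace ℝ (Fin (2 * n))) :
    poissonBracket f (expWeight H hH β g) x -
        β * (expWeight H hH β g : EuclideanSpace ℝ (Fin (2 * n)) → ℂ) x *
          poissonBracket f (fun y => (H y : ℂ)) x =
      Real.exp (β * H x) * poissonBracket f g x := by
  have hHx : DifferentiableAt ℝ H x := hH.differentiable (by simp) x
  have hexp := (contDiff_ofReal_exp_mul hH β).differentiable (by simp) x
  have hg : DifferentiableAt ℝ (g : EuclideanSpace ℝ (Fin (2 * n)) → ℂ) x :=
    g.2.1.differentiable (by simp) x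
  simp only [expWeight, poissonBracket_mul_right f hexp hg, poissonBracket_ofReal_exp_mul f hHx]
  ring

end ExpWeight

theorem static_classical_KMS_iff_twisted_functional_vanishes_on_brackets_general
    (n : ℕ)
    (H : EuclideanSpace ℝ (Fin (2 * n)) → ℝ) (hH : ContDiff ℝ (⊤ : ℕ∞) H)
    (β : ℝ)
    (μ : TestFunctions2 n →ₗ[ℂ] ℂ) :
    (∀ (f g h : TestFunctions2 n),
        (h : EuclideanSpace ℝ (Fin (2 * n)) → ℂ) =
          (fun x =>
            poissonBracket (f : EuclideanSpace ℝ (Fin (2 * n)) → ℂ)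
                (g : EuclideanSpace ℝ (Fin (2 * n)) → ℂ) x -
              (β : ℂ) * (g : EuclideanSpace ℝ (Fin (2 * n)) → ℂ) x *
                poissonBracket (f : EuclideanSpace ℝ (Fin (2 * n)) → ℂ)
                  (fun y => (H y : ℂ)) x) →
        μ h = 0) ↔
      (∀ (f g h : TestFunctions2 n),
        (h : EuclideanSpace ℝ (Fin (2 * n)) → ℂ) =
          (fun x =>
            (Real.exp (β * H x) : ℂ) *
              poissonBracket (f : EuclideanSpace ℝ (Fin (2 * n)) → ℂ)
                (g : EuclideanSpace ℝ (Fin (2 * n)) → ℂ) x) →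
        μ h = 0) := by
  constructor
  · intro hKMS f g h hh
    refine hKMS f (expWeight H hH β g) h (hh.trans (funext fun x => ?_))
    exact (poissonBracket_expWeight_sub H hH β f g x).symm
  · intro hTwisted f g h hh
    refine hTwisted f (expWeight H hH (-β) g) h (hh.trans (funext fun x => ?_))
    have key := poissonBracket_expWeight_sub H hH β f (expWeight H hH (-β) g) x
    rwa [expWeight_expWeight_neg] at key

/-- For smooth real `H` and `β ∈ ℝ`, a linear functional `μ₀` on
`C_c^∞(ℝ^{2n})` satisfies the static classical KMS condition
`μ₀({f,g} − β·g·{f,H}) = 0` iff `f ↦ μ₀(e^{βH}·f)` vanishes on Poisson brackets, i.e.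
`μ₀(e^{βH}·{f,g}) = 0` for all `f, g`. -/
theorem static_classical_KMS_iff_twisted_functional_vanishes_on_brackets
    (n : ℕ) (hn : 1 ≤ n)
    (H : EuclideanSpace ℝ (Fin (2 * n)) → ℝ) (hH : ContDiff ℝ (⊤ : ℕ∞) H)
    (β : ℝ)
    (μ : TestFunctions2 n →ₗ[ℂ] ℂ) :
    (∀ (f g h : TestFunctions2 n),
        (h : EuclideanSpace ℝ (Fin (2 * n)) → ℂ) =
          (fun x =>
            poissonBracket (f : EuclideanSpace ℝ (Fin (2 * n)) → ℂ)
                (g : EuclideanSpace ℝ (Fin (2 * n)) → ℂ) x -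
              (β : ℂ) * (g : EuclideanSpace ℝ (Fin (2 * n)) → ℂ) x *
                poissonBracket (f : EuclideanSpace ℝ (Fin (2 * n)) → ℂ)
                  (fun y => (H y : ℂ)) x) →
        μ h = 0) ↔
      (∀ (f g h : TestFunctions2 n),
        (h : EuclideanSpace ℝ (Fin (2 * n)) → ℂ) =
          (fun x =>
            (Real.exp (β * H x) : ℂ) *
              poissonBracket (f : EuclideanSpace ℝ (Fin (2 * n)) → ℂ)
                (g : EuclideanSpace ℝ (Fin (2 * n)) → ℂ) x) →
        μ h = 0) :=
  static_classical_KMS_iff_twisted_functional_vanishes_on_brackets_general n H hH β μ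
end

section
/- Let A be an associative unital ℂ-algebra and let Φ : A[[λ]] → ℂ[[λ]] be a ℂ[[λ]]-linear map, where A[[λ]] denotes the ring of formal power series with coefficients in A, viewed as a module over ℂ[[λ]] via the canonical inclusion ℂ[[λ]] → A[[λ]]. Then there exists a family (μ_r)_{r∈ℕ} of ℂ-linear maps μ_r : A → ℂ such that for every f = Σ_{s≥0} λ^s f_s ∈ A[[λ]] and every n ∈ ℕ, the coefficient of λ^n in Φ(f) equals Σ_{r+s=n} μ_r(f_s). -/
/-!
Since `Φ` commutes with multiplication by `X`, splitting `f = X * f' + C f₀` gives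
`coeff (n + 1) (Φ f) = coeff (n + 1) (Φ (C f₀)) + coeff n (Φ f')`, so by induction on `n`
the coefficients of `Φ f` are determined by the values of `Φ` on constant series:
`μ r a` is the `r`-th coefficient of `Φ (C a)`.
-/

open Finset

namespace PowerSeries

theorem coeff_apply_eq_sum_antidiagonal_of_map_X_mul {A B : Type*} [Semiring A] [Semiring B]
    (Φ : A⟦X⟧ →+ B⟦X⟧) (hX : ∀ f, Φ (X * f) = X * Φ f) (n : ℕ) (f : A⟦X⟧) :
    coeff n (Φ f) = ∑ p ∈ antidiagonal n, coeff p.1 (Φ (C (coeff p.2 f))) := by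
  induction n generalizing f with
  | zero =>
    conv_lhs => rw [eq_X_mul_shift_add_const f]
    simp [hX]
  | succ n ih =>
    conv_lhs => rw [eq_X_mul_shift_add_const f]
    rw [map_add, map_add, hX, coeff_succ_X_mul, ih, Nat.sum_antidiagonal_succ', add_comm,
      coeff_zero_eq_constantCoeff_apply]
    simp only [coeff_mk]

variable {R A : Type*} [CommSemiring R] [Semiring A] [Algebra R A]

noncomputable def coeffOnConstants (Φ : A⟦X⟧ →+ R⟦X⟧)
    (hsmul : ∀ a f, Φ (map (algebraMap R A) a * f) = a * Φ f) (r : ℕ) : A →ₗ[R] R where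
  toFun a := coeff r (Φ (C a))
  map_add' a b := by simp only [map_add]
  map_smul' c a := by
    rw [Algebra.smul_def, map_mul, ← map_C, hsmul, coeff_C_mul, RingHom.id_apply, smul_eq_mul]

theorem coeff_apply_eq_sum_coeffOnConstants (Φ : A⟦X⟧ →+ R⟦X⟧)
    (hsmul : ∀ a f, Φ (map (algebraMap R A) a * f) = a * Φ f) (n : ℕ) (f : A⟦X⟧) :
    coeff n (Φ f) = ∑ p ∈ antidiagonal n, coeffOnConstants Φ hsmul p.1 (coeff p.2 f) :=
  coeff_apply_eq_sum_antidiagonal_of_map_X_mul Φ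
    (fun f => by simpa only [map_X] using hsmul X f) n f

end PowerSeries

/-- Let `A` be an associative unital `ℂ`-algebra and let
`Φ : A[[λ]] → ℂ[[λ]]` be `ℂ[[λ]]`-linear, where `ℂ[[λ]]` acts on `A[[λ]]` through the
canonical inclusion `ℂ[[λ]] → A[[λ]]` (i.e. `Φ` is additive and
`Φ(a·f) = a·Φ(f)` for every `a ∈ ℂ[[λ]]`).  Then there is a family `(μ_r)_{r∈ℕ}` of
`ℂ`-linear maps `μ_r : A → ℂ` such that for every `f = Σ_s λ^s f_s` and every `n`,
the coefficient of `λ^n` in `Φ(f)` equals `Σ_{r+s=n} μ_r(f_s)`. -/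
theorem powerSeries_linear_functional_has_coefficientwise_form
    (A : Type*) [Ring A] [Algebra ℂ A]
    (Φ : PowerSeries A → PowerSeries ℂ)
    (hadd : ∀ f g : PowerSeries A, Φ (f + g) = Φ f + Φ g)
    (hsmul : ∀ (a : PowerSeries ℂ) (f : PowerSeries A),
      Φ (PowerSeries.map (algebraMap ℂ A) a * f) = a * Φ f) :
    ∃ μ : ℕ → (A →ₗ[ℂ] ℂ),
      ∀ (f : PowerSeries A) (n : ℕ),
        PowerSeries.coeff n (Φ f) =
          ∑ p ∈ Finset.HasAntidiagonal.antidiagonal n, μ p.1 (PowerSeries.coeff p.2 f) :=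
  ⟨PowerSeries.coeffOnConstants (AddMonoidHom.mk' Φ hadd) hsmul,
    fun f n => PowerSeries.coeff_apply_eq_sum_coeffOnConstants (AddMonoidHom.mk' Φ hadd) hsmul n f⟩
end
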